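/- arXiv:1908.07128 — 2 statements merged into one kernel-verified Lean document; each statement's English description precedes it below -/
import Mathlib

section
/- Over ℝ one has the factorization x³ − 3x + 1 = (x − 2cos(2π/9)) · (x − 2cos(4π/9)) · (x − 2cos(8π/9)). -/
/-!
Since `cos 3θ = 4 cos³ θ - 3 cos θ`, the number `2 cos θ` is a root of `X³ - 3X + 1` exactly when
`cos 3θ = -1/2`. The angles `2π/9`, `4π/9`, `8π/9` triple to `2π/3`, `2π - 2π/3`, `2π/3 + 2π`, so
they give three roots, distinct because cosine is injective on `[0, π]`. A monic cubic with
three distinct roots is the product of the corresponding linear factors.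
-/

open Polynomial Real

namespace Polynomial

variable {R : Type*} [CommRing R] [IsDomain R]

theorem prod_X_sub_C_eq_of_monic_of_isRoot {p : R[X]} (hp : p.Monic) {s : Finset R}
    (hcard : s.card = p.natDegree) (hroots : ∀ x ∈ s, p.IsRoot x) :
    ∏ x ∈ s, (X - C x) = p := by
  have hle : s.val ≤ p.roots :=
    (Multiset.le_iff_subset s.nodup).2 fun x hx => (mem_roots hp.ne_zero).2 (hroots x hx)
  have hs : s.val = p.roots :=
    Multiset.eq_of_le_of_card_le hle (p.card_roots'.trans hcard.ge)
  rw [Finset.prod_eq_multiset_prod, hs]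
  exact prod_multiset_X_sub_C_of_monic_of_roots_card_eq hp (hs ▸ hcard)

theorem eq_X_sub_C_mul_X_sub_C_mul_X_sub_C {p : R[X]} (hp : p.Monic) (hdeg : p.natDegree = 3)
    {a b c : R} (hab : a ≠ b) (hac : a ≠ c) (hbc : b ≠ c)
    (ha : p.IsRoot a) (hb : p.IsRoot b) (hc : p.IsRoot c) :
    p = (X - C a) * (X - C b) * (X - C c) := by
  classical
  have hcard : ({a, b, c} : Finset R).card = p.natDegree :=
    hdeg ▸ Finset.card_eq_three.2 ⟨a, b, c, hab, hac, hbc, rfl⟩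
  rw [← prod_X_sub_C_eq_of_monic_of_isRoot hp hcard (by simpa using ⟨ha, hb, hc⟩),
    Finset.prod_insert (by simp [hab, hac]), Finset.prod_pair hbc, mul_assoc]

end Polynomial

theorem eval_two_cos_X_pow_three_sub_three_mul_X_add_one (θ : ℝ) :
    (X ^ 3 - 3 * X + 1 : ℝ[X]).eval (2 * cos θ) = 2 * cos (3 * θ) + 1 := by
  rw [cos_three_mul]
  simp only [eval_add, eval_sub, eval_mul, eval_pow, eval_X, eval_ofNat, eval_one]
  ring

theorem isRoot_two_cos_of_cos_three_mul_eq {θ : ℝ} (h : cos (3 * θ) = -(1 / 2)) :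
    (X ^ 3 - 3 * X + 1 : ℝ[X]).IsRoot (2 * cos θ) := by
  rw [IsRoot.def, eval_two_cos_X_pow_three_sub_three_mul_X_add_one, h]
  norm_num

theorem cos_two_pi_div_three : cos (2 * π / 3) = -(1 / 2) := by
  rw [show 2 * π / 3 = π - π / 3 by ring, cos_pi_sub, cos_pi_div_three]

theorem cubic_factorization :
    (X ^ 3 - 3 * X + 1 : ℝ[X])
      = (X - C (2 * Real.cos (2 * Real.pi / 9)))
        * (X - C (2 * Real.cos (4 * Real.pi / 9)))
        * (X - C (2 * Real.cos (8 * Real.pi / 9))) := by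
  have two_cos_ne {k l : ℝ} (hk : 0 ≤ k) (hkl : k < l) (hl : l ≤ 9) :
      2 * cos (k * π / 9) ≠ 2 * cos (l * π / 9) := by
    have hπ := pi_pos
    have : cos (l * π / 9) < cos (k * π / 9) :=
      cos_lt_cos_of_nonneg_of_le_pi (by positivity)
        (by rw [div_le_iff₀ (by norm_num)]; nlinarith) (by gcongr)
    linarith
  refine eq_X_sub_C_mul_X_sub_C_mul_X_sub_C (by monicity!) (by compute_degree!)
    (two_cos_ne (by norm_num) (by norm_num) (by norm_num))
    (two_cos_ne (by norm_num) (by norm_num) (by norm_num))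
    (two_cos_ne (by norm_num) (by norm_num) (by norm_num)) ?_ ?_ ?_
  · refine isRoot_two_cos_of_cos_three_mul_eq ?_
    rw [show 3 * (2 * π / 9) = 2 * π / 3 by ring, cos_two_pi_div_three]
  · refine isRoot_two_cos_of_cos_three_mul_eq ?_
    rw [show 3 * (4 * π / 9) = 2 * π - 2 * π / 3 by ring, cos_two_pi_sub, cos_two_pi_div_three]
  · refine isRoot_two_cos_of_cos_three_mul_eq ?_
    rw [show 3 * (8 * π / 9) = 2 * π / 3 + 2 * π by ring, cos_add_two_pi, cos_two_pi_div_three]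
end

section
/- Let r₁ = −α − α² + α⁵, r₂ = α + α² − α⁴, r₃ = α⁴ − α⁵ with α = e^{iπ/9}. If a, b, c ∈ ℂ satisfy the three equations r₁a + r₂b + r₃c = 0, r₂a + r₃b + r₁c = 0, and r₃a + r₁b + r₂c = 0, then a = b = c. -/
/-!
Since `r₁ + r₂ + r₃ = 0`, subtracting `c` from every unknown turns the first two equations into
`r₁ (a - c) + r₂ (b - c) = 0` and `r₂ (a - c) + r₃ (b - c) = 0`, a 2 × 2 system whose determinant
`r₁ r₃ - r₂²` equals `r₁ r₂ + r₂ r₃ + r₃ r₁ = -3`. That value is computed from the fact that `α`, a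
primitive 18th root of unity, is a root of `Φ₁₈ = X⁶ - X³ + 1`.
-/

/-- `α = e^{iπ/9}`. -/
noncomputable def α : ℂ := Complex.exp (Real.pi * Complex.I / 9)

noncomputable def r₁ : ℂ := -α - α ^ 2 + α ^ 5
noncomputable def r₂ : ℂ := α + α ^ 2 - α ^ 4
noncomputable def r₃ : ℂ := α ^ 4 - α ^ 5

theorem eq_and_eq_of_cyclic_system {R : Type*} [CommRing R] [NoZeroDivisors R] {r₁ r₂ r₃ : R}
    (hsum : r₁ + r₂ + r₃ = 0) (he₂ : r₁ * r₂ + r₂ * r₃ + r₃ * r₁ ≠ 0) {a b c : R}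
    (h₁ : r₁ * a + r₂ * b + r₃ * c = 0) (h₂ : r₂ * a + r₃ * b + r₁ * c = 0) :
    a = b ∧ b = c := by
  have hac : (r₁ * r₂ + r₂ * r₃ + r₃ * r₁) * (a - c) = 0 := by
    linear_combination r₃ * h₁ - r₂ * h₂ + (r₂ * (a - c) + c * (r₂ - r₃)) * hsum
  have hbc : (r₁ * r₂ + r₂ * r₃ + r₃ * r₁) * (b - c) = 0 := by
    linear_combination r₁ * h₂ - r₂ * h₁ + (r₂ * (b - c) + c * (r₂ - r₁)) * hsum
  have ha := sub_eq_zero.mp ((mul_eq_zero.mp hac).resolve_left he₂)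
  have hb := sub_eq_zero.mp ((mul_eq_zero.mp hbc).resolve_left he₂)
  exact ⟨ha.trans hb.symm, hb⟩

theorem isPrimitiveRoot_α : IsPrimitiveRoot α 18 := by
  convert Complex.isPrimitiveRoot_exp 18 (by norm_num) using 2
  unfold α
  congr 1
  push_cast
  ring

theorem α_pow_six_sub_α_pow_three_add_one : α ^ 6 - α ^ 3 + 1 = 0 := by
  have h9 : α ^ 9 = -1 := (isPrimitiveRoot_α.pow (by norm_num) (by norm_num : 18 = 9 * 2)).eq_neg_one_of_two_right
  have h3 : α ^ 3 + 1 ≠ 0 := by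
    intro h
    have h6 : α ^ 6 = 1 := by linear_combination (α ^ 3 - 1) * h
    exact absurd (isPrimitiveRoot_α.dvd_of_pow_eq_one 6 h6) (by norm_num)
  refine (mul_eq_zero.mp ?_).resolve_left h3
  linear_combination h9

theorem r₁_add_r₂_add_r₃ : r₁ + r₂ + r₃ = 0 := by
  unfold r₁ r₂ r₃
  ring

theorem r₁_mul_r₂_add_r₂_mul_r₃_add_r₃_mul_r₁ : r₁ * r₂ + r₂ * r₃ + r₃ * r₁ = -3 := by
  unfold r₁ r₂ r₃
  linear_combination (3 - α ^ 2 + α ^ 3 - α ^ 4) * α_pow_six_sub_α_pow_three_add_one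

theorem cyclic_system_solution :
    ∀ a b c : ℂ,
      r₁ * a + r₂ * b + r₃ * c = 0 →
      r₂ * a + r₃ * b + r₁ * c = 0 →
      r₃ * a + r₁ * b + r₂ * c = 0 →
      a = b ∧ b = c := by
  intro a b c h₁ h₂ _
  refine eq_and_eq_of_cyclic_system r₁_add_r₂_add_r₃ ?_ h₁ h₂
  rw [r₁_mul_r₂_add_r₂_mul_r₃_add_r₃_mul_r₁]
  norm_num
end
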